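/- arXiv:2210.00081 — 2 statements merged into one kernel-verified Lean document; each statement's English description precedes it below -/
import Mathlib

section
/- Let c be a real number with |c| < 1 and let x : ℕ → ℝ satisfy x(0) = 0 and x(t+1) = c·x(t) + w(t) for all t. Then for every horizon T, the sum over t from 0 to T of x(t)² is at most (1/(1−|c|))² times the sum over t from 0 to T of w(t)². -/
/-!
Storage-function argument: with `a = |c|`, the quadratic storage `V x = (1 - a) x²` satisfies the
dissipation inequality `V (c x + w) + (1 - a)² x² ≤ V x + w²`. Summing it along the trajectory
telescopes the storage terms, and since `V (x 0) = 0` and `V ≥ 0` this leaves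
`(1 - a)² ∑ x t² ≤ ∑ w t²`.
-/

open Finset

theorem sum_add_le_add_sum_of_dissipation (V s r : ℕ → ℝ)
    (h : ∀ t, V (t + 1) + s t ≤ V t + r t) (n : ℕ) :
    ∑ t ∈ range n, s t + V n ≤ V 0 + ∑ t ∈ range n, r t := by
  have hsum : ∑ t ∈ range n, (s t - r t) ≤ ∑ t ∈ range n, (V t - V (t + 1)) :=
    sum_le_sum fun t _ => by linarith [h t]
  rw [sum_sub_distrib, sum_range_sub'] at hsum
  linarith

theorem one_sub_abs_mul_sq_add_le (c X W : ℝ) :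
    (1 - |c|) * (c * X + W) ^ 2 ≤ |c| * (1 - |c|) * X ^ 2 + W ^ 2 := by
  -- the gap is `|c| * ((1 - |c|) X ∓ W)²`, the sign being that of `c`
  rcases abs_cases c with ⟨hc, hc0⟩ | ⟨hc, hc0⟩ <;> rw [hc]
  · nlinarith [mul_nonneg hc0 (sq_nonneg ((1 - c) * X - W))]
  · nlinarith [mul_nonneg (neg_nonneg.mpr hc0.le) (sq_nonneg ((1 + c) * X + W))]

theorem quadratic_storage_dissipation (c X W : ℝ) :
    (1 - |c|) * (c * X + W) ^ 2 + (1 - |c|) ^ 2 * X ^ 2 ≤ (1 - |c|) * X ^ 2 + W ^ 2 := by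
  nlinarith [one_sub_abs_mul_sq_add_le c X W]

theorem finite_horizon_l2_gain (c : ℝ) (hc : |c| < 1) (x w : ℕ → ℝ) (hx0 : x 0 = 0)
    (hrec : ∀ t, x (t + 1) = c * x t + w t) (T : ℕ) :
    ∑ t ∈ Finset.range (T + 1), (x t) ^ 2 ≤
      (1 / (1 - |c|)) ^ 2 * ∑ t ∈ Finset.range (T + 1), (w t) ^ 2 := by
  have hgap : 0 < 1 - |c| := by linarith
  have hdiss := sum_add_le_add_sum_of_dissipation (fun t => (1 - |c|) * x t ^ 2)
    (fun t => (1 - |c|) ^ 2 * x t ^ 2) (fun t => w t ^ 2)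
    (fun t => by simpa only [hrec t] using quadratic_storage_dissipation c (x t) (w t)) (T + 1)
  simp only [← mul_sum, hx0] at hdiss
  have hstorage : 0 ≤ (1 - |c|) * x (T + 1) ^ 2 := by positivity
  rw [div_pow, one_pow, one_div_mul_eq_div, le_div_iff₀ (by positivity)]
  linarith
end

section
/- Let G be a finite simple graph on vertex set V with degree function d, let b > 0, and for each vertex i let a_i ∈ (0,1) satisfy a_i² + 2b²·d(i) < a_i. Define the closed-loop matrix C with entries C_{ii} = a_i − b²·d(i)/(1−a_i) and C_{ij} = b²/(1−a_j) if {i,j} is an edge of G, and C_{ij} = 0 otherwise. Then every eigenvalue λ of C satisfies |λ| < 1 (C is Schur stable). -/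
open Matrix in


theorem closed_loop_schur_stable {V : Type*} [Fintype V] [DecidableEq V]
    (G : SimpleGraph V) [DecidableRel G.Adj] (b : ℝ) (hb : 0 < b)
    (a : V → ℝ) (ha : ∀ i, a i ∈ Set.Ioo (0:ℝ) 1)
    (hcomm : ∀ i, (a i) ^ 2 + 2 * b ^ 2 * (G.degree i : ℝ) < a i)
    (C : Matrix V V ℝ)
    (hdiag : ∀ i, C i i = a i - b ^ 2 * (G.degree i : ℝ) / (1 - a i))
    (hadj : ∀ i j, i ≠ j → G.Adj i j → C i j = b ^ 2 / (1 - a j))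
    (hzero : ∀ i j, i ≠ j → ¬ G.Adj i j → C i j = 0) :
    ∀ μ ∈ spectrum ℂ (C.map (Complex.ofReal)), ‖μ‖ < 1 := by
  intro μ hμ
  set M : Matrix V V ℂ := C.map Complex.ofReal with hM
  -- μ is in the spectrum of the transpose
  have htr : μ ∈ spectrum ℂ Mᵀ := by
    rw [spectrum.mem_iff] at hμ ⊢
    intro hU
    apply hμ
    have h1 : ((algebraMap ℂ (Matrix V V ℂ)) μ - Mᵀ) = ((algebraMap ℂ (Matrix V V ℂ)) μ - M)ᵀ := by
      simp [Matrix.transpose_sub, Matrix.algebraMap_eq_diagonal]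
    rw [h1] at hU
    rw [Matrix.isUnit_iff_isUnit_det] at hU ⊢
    rwa [Matrix.det_transpose] at hU
  have heig : Module.End.HasEigenvalue (Matrix.toLin' Mᵀ) μ := by
    rw [Module.End.hasEigenvalue_iff_mem_spectrum]
    have : Matrix.toLin' Mᵀ = Matrix.toLinAlgEquiv (Pi.basisFun ℂ V) Mᵀ := rfl
    rw [this, AlgEquiv.spectrum_eq (Matrix.toLinAlgEquiv (Pi.basisFun ℂ V)) Mᵀ]
    exact htr
  obtain ⟨k, hk⟩ := eigenvalue_mem_ball heig
  rw [mem_closedBall_iff_norm'] at hk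
  obtain ⟨ha0, ha1⟩ := ha k
  have h1a : (0:ℝ) < 1 - a k := by linarith
  set r : ℝ := b ^ 2 * (G.degree k : ℝ) / (1 - a k) with hr
  have hr0 : 0 ≤ r := by positivity
  have hrlt : r < a k / 2 := by
    have h2 : 2 * b ^ 2 * (G.degree k : ℝ) < a k * (1 - a k) := by nlinarith [hcomm k]
    rw [hr, div_lt_iff₀ h1a]
    nlinarith
  -- compute the radius
  have hsum : ∑ j ∈ Finset.univ.erase k, ‖Mᵀ k j‖ = r := by
    have hterm : ∀ j ∈ Finset.univ.erase k, ‖Mᵀ k j‖ =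
        if G.Adj j k then b ^ 2 / (1 - a k) else 0 := by
      intro j hj
      have hjk : j ≠ k := Finset.ne_of_mem_erase hj
      by_cases hadjjk : G.Adj j k
      · simp only [hadjjk, if_true]
        rw [Matrix.transpose_apply, hM, Matrix.map_apply, hadj j k hjk hadjjk,
          Complex.norm_real, Real.norm_eq_abs, abs_of_pos (by positivity)]
      · simp only [hadjjk, if_false]
        rw [Matrix.transpose_apply, hM, Matrix.map_apply, hzero j k hjk hadjjk]
        simp
    rw [Finset.sum_congr rfl hterm]
    have hins : ∑ j ∈ Finset.univ.erase k, (if G.Adj j k then b ^ 2 / (1 - a k) else 0)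
        = ∑ j, (if G.Adj j k then b ^ 2 / (1 - a k) else 0) := by
      rw [← Finset.sum_erase_add _ _ (Finset.mem_univ k)]
      simp [G.irrefl]
    have hcard : (Finset.univ.filter (fun j => G.Adj j k)).card = G.degree k := by
      rw [← SimpleGraph.card_neighborFinset_eq_degree]
      congr 1
      ext j
      simp [SimpleGraph.adj_comm]
    rw [hins, Finset.sum_ite, Finset.sum_const, Finset.sum_const, hcard]
    simp only [smul_zero, add_zero, nsmul_eq_mul]
    rw [hr]
    ring
  -- diagonal entry
  have hdiagk : Mᵀ k k = ((a k - r : ℝ) : ℂ) := by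
    rw [Matrix.transpose_apply, hM, Matrix.map_apply, hdiag k, hr]
  have hkk : ‖μ - Mᵀ k k‖ ≤ r := by rw [norm_sub_rev]; rwa [hsum] at hk
  calc ‖μ‖ ≤ ‖μ - Mᵀ k k‖ + ‖Mᵀ k k‖ := by
        simpa using norm_add_le (μ - Mᵀ k k) (Mᵀ k k)
    _ ≤ r + (a k - r) := by
        apply add_le_add hkk
        rw [hdiagk, Complex.norm_real, Real.norm_eq_abs, abs_of_pos (by linarith)]
    _ < 1 := by linarith
end
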